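/- Let n ≥ 2, let V be a real inner product space, let ν ∈ V be a unit vector, let J, D ∈ V, let μ, h, t, λ be real numbers with λ ≥ 0, and let χ be a real symmetric (n−1) × (n−1) matrix with tr χ = h. Assume the modified dominant energy condition μ − ‖J‖ + (1/2)·((n/(n−1))·h² − 2·h·t − 2·‖D‖) ≥ 0 holds and that equality 2·λ + 2·(μ + ⟨J, ν⟩) + (h² − 2·h·t + 2·⟨D, ν⟩) + ‖χ‖² = 0 holds. Then λ = 0, the trace-free part χ⁰ = χ − (h/(n−1))·I vanishes, ⟨J, ν⟩ = −‖J‖, ⟨D, ν⟩ = −‖D‖, and μ − ‖J‖ + (1/2)·((n/(n−1))·h² − 2·h·t − 2·‖D‖) = 0. -/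
import Mathlib


open scoped RealInnerProductSpace

open Matrix

/-- Squared Frobenius norm of a real square matrix. -/
noncomputable def frobSq {m : ℕ} (A : Matrix (Fin m) (Fin m) ℝ) : ℝ :=
  ∑ i, ∑ j, (A i j) ^ 2

lemma frobSq_nonneg {m : ℕ} (A : Matrix (Fin m) (Fin m) ℝ) : 0 ≤ frobSq A := by
  unfold frobSq
  positivity

lemma frobSq_sub_smul_one {m : ℕ} (A : Matrix (Fin m) (Fin m) ℝ) (c : ℝ) :
    frobSq (A - c • (1 : Matrix (Fin m) (Fin m) ℝ)) =
      frobSq A - 2 * c * A.trace + c ^ 2 * m := by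
  unfold frobSq
  have : ∀ i j : Fin m, (A - c • (1 : Matrix (Fin m) (Fin m) ℝ)) i j =
      A i j - c * (if i = j then 1 else 0) := by
    intro i j
    simp [Matrix.sub_apply, Matrix.smul_apply, Matrix.one_apply]
  simp only [this]
  have key : ∀ i : Fin m, ∑ j, (A i j - c * (if i = j then 1 else 0)) ^ 2 =
      (∑ j, (A i j) ^ 2) - 2 * c * A i i + c ^ 2 := by
    intro i
    have h1 : ∀ j, (A i j - c * (if i = j then 1 else 0)) ^ 2 =
        (A i j) ^ 2 - 2 * c * (if i = j then A i j else 0)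
          + c ^ 2 * (if i = j then 1 else 0) := by
      intro j
      by_cases hij : i = j <;> simp [hij] <;> ring
    simp only [h1, Finset.sum_add_distrib, Finset.sum_sub_distrib,
      ← Finset.mul_sum, Finset.sum_ite_eq Finset.univ i (fun j => A i j),
      Finset.sum_ite_eq Finset.univ i (fun _ => (1:ℝ))]
    simp
  simp only [key, Finset.sum_add_distrib, Finset.sum_sub_distrib, ← Finset.mul_sum]
  rw [Matrix.trace]
  simp [Matrix.diag, Finset.sum_const, nsmul_eq_mul]
  ring

theorem conformal_scalar_rigidity (n : ℕ) (hn : 2 ≤ n)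
    {V : Type*} [NormedAddCommGroup V] [InnerProductSpace ℝ V]
    (ν J D : V) (hν : ‖ν‖ = 1) (μ h t lam : ℝ) (hlam : 0 ≤ lam)
    (χ : Matrix (Fin (n - 1)) (Fin (n - 1)) ℝ) (hχ : χ.IsSymm)
    (htr : χ.trace = h)
    (hdec : μ - ‖J‖ + (1 / 2) * (((n : ℝ) / (n - 1)) * h ^ 2 - 2 * h * t - 2 * ‖D‖) ≥ 0)
    (heq : 2 * lam + 2 * (μ + ⟪J, ν⟫) + (h ^ 2 - 2 * h * t + 2 * ⟪D, ν⟫) + frobSq χ = 0) :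
    lam = 0 ∧
    χ - (h / ((n : ℝ) - 1)) • (1 : Matrix (Fin (n - 1)) (Fin (n - 1)) ℝ) = 0 ∧
    ⟪J, ν⟫ = -‖J‖ ∧
    ⟪D, ν⟫ = -‖D‖ ∧
    μ - ‖J‖ + (1 / 2) * (((n : ℝ) / (n - 1)) * h ^ 2 - 2 * h * t - 2 * ‖D‖) = 0 := by
  have hm : ((n - 1 : ℕ) : ℝ) = (n : ℝ) - 1 := by
    have : (1 : ℕ) ≤ n := le_trans one_le_two hn
    push_cast [Nat.cast_sub this]
    ring
  have hmpos : (0 : ℝ) < (n : ℝ) - 1 := by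
    have : (2 : ℝ) ≤ (n : ℝ) := by exact_mod_cast hn
    linarith
  set c : ℝ := h / ((n : ℝ) - 1) with hc
  set χ0 := χ - c • (1 : Matrix (Fin (n - 1)) (Fin (n - 1)) ℝ) with hχ0
  have hF : frobSq χ0 = frobSq χ - 2 * c * h + c ^ 2 * ((n : ℝ) - 1) := by
    rw [hχ0, frobSq_sub_smul_one, htr, hm]
  have hF' : frobSq χ = frobSq χ0 + h ^ 2 / ((n : ℝ) - 1) := by
    rw [hF, hc]
    field_simp
    ring
  have hF0 : 0 ≤ frobSq χ0 := frobSq_nonneg _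
  -- Cauchy-Schwarz bounds
  have hJcs : ⟪J, ν⟫ ≥ -‖J‖ := by
    have := abs_real_inner_le_norm J ν
    rw [hν, mul_one] at this
    have := abs_le.mp this
    linarith [this.1]
  have hDcs : ⟪D, ν⟫ ≥ -‖D‖ := by
    have := abs_real_inner_le_norm D ν
    rw [hν, mul_one] at this
    have := abs_le.mp this
    linarith [this.1]
  -- key identity: n/(n-1) h^2 = h^2 + h^2/(n-1)
  have hkey : ((n : ℝ) / ((n : ℝ) - 1)) * h ^ 2 = h ^ 2 + h ^ 2 / ((n : ℝ) - 1) := by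
    field_simp
    ring
  rw [hkey] at hdec ⊢
  rw [hF'] at heq
  set q : ℝ := h ^ 2 / ((n : ℝ) - 1) with hq
  have hlam0 : lam = 0 := by linarith
  have hJ0 : ⟪J, ν⟫ = -‖J‖ := by linarith
  have hD0 : ⟪D, ν⟫ = -‖D‖ := by linarith
  have hE0 : μ - ‖J‖ + 1 / 2 * (h ^ 2 + q - 2 * h * t - 2 * ‖D‖) = 0 := by linarith
  have hF00 : frobSq χ0 = 0 := by linarith
  have hχ00 : χ0 = 0 := by
    ext i j
    have h1 : ∀ i ∈ Finset.univ, (0:ℝ) ≤ ∑ j, (χ0 i j) ^ 2 := by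
      intro i _; positivity
    have h2 : ∀ i ∈ (Finset.univ : Finset (Fin (n-1))), ∑ j, (χ0 i j) ^ 2 = 0 :=
      (Finset.sum_eq_zero_iff_of_nonneg h1).mp hF00
    have h3 : ∀ j ∈ (Finset.univ : Finset (Fin (n-1))), (χ0 i j) ^ 2 = 0 :=
      (Finset.sum_eq_zero_iff_of_nonneg (by intro j _; positivity)).mp
        (h2 i (Finset.mem_univ i))
    have := h3 j (Finset.mem_univ j)
    simpa using pow_eq_zero_iff (n := 2) (by norm_num) |>.mp this
  exact ⟨hlam0, hχ00, hJ0, hD0, hE0⟩
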